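/- Let W be a nonnegative real random variable with 0<E[W]<∞ and E[W²]<∞, let q≥3 be an integer, fix B=0, and assume there exists t_*>0 such that 𝓕_0''(t)>0 for 0<t<t_* and 𝓕_0''(t)<0 for t>t_*, where 𝓕_0(t)=E[(W/E[W])·(e^{tW}−1)/(e^{tW}+q−1)]. Define 𝒦(t) = (1/E[W])·E[log((e^{tW}+q−1)/q)] − ((q−1)/(2q))·t·𝓕_0(t) − t/q for t≥0. Then there is a unique t_c>0 such that 𝒦(t_c)=0. Moreover, setting β_c = log(1 + t_c/𝓕_0(t_c)), β'_c = e^{β_c}−1 = t_c/𝓕_0(t_c) and s_c = 𝓕_0(t_c), the pair satisfies the stationarity condition 𝓕_0(β'_c·s_c) = s_c and the criticality condition p_{β_c,0}(s_c) = p_{β_c,0}(0); that is, β_c is the critical inverse temperature of the zero-field annealed Potts model and s_c is its order parameter at criticality. -/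

import Mathlib

open MeasureTheory Filter Topology Set

/-- The function `𝓕_0(t) = E[(W/E[W])·(e^{tW}−1)/(e^{tW}+q−1)]`. -/
noncomputable def Ffun {Ω : Type*} [MeasurableSpace Ω] (μ : Measure Ω)
    (W : Ω → ℝ) (q : ℕ) (t : ℝ) : ℝ :=
  ∫ ω, (W ω / (∫ ω', W ω' ∂μ)) * (Real.exp (t * W ω) - 1) /
    (Real.exp (t * W ω) + q - 1) ∂μ

/-- The function
`𝒦(t) = (1/E[W])·E[log((e^{tW}+q−1)/q)] − ((q−1)/(2q))·t·𝓕_0(t) − t/q`. -/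
noncomputable def Kfun {Ω : Type*} [MeasurableSpace Ω] (μ : Measure Ω)
    (W : Ω → ℝ) (q : ℕ) (t : ℝ) : ℝ :=
  (1 / ∫ ω, W ω ∂μ) * (∫ ω, Real.log ((Real.exp (t * W ω) + q - 1) / q) ∂μ)
    - ((q : ℝ) - 1) / (2 * q) * (t * Ffun μ W q t) - t / q

/-- The reduced zero-field pressure functional
`p_{β,0}(s) = E[log(e^{β'Ws}+q−1)] − (β'E[W]/(2q))·[(q−1)s²+2s−1]`, `β'=e^β−1`. -/
noncomputable def pfun {Ω : Type*} [MeasurableSpace Ω] (μ : Measure Ω)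
    (W : Ω → ℝ) (q : ℕ) (β : ℝ) (s : ℝ) : ℝ :=
  (∫ ω, Real.log (Real.exp ((Real.exp β - 1) * W ω * s) + q - 1) ∂μ)
    - (Real.exp β - 1) * (∫ ω, W ω ∂μ) / (2 * q) * ((q - 1) * s ^ 2 + 2 * s - 1)

/-!
Write `F = 𝓕_0` and `G(t) = F(t) − t F'(t)`. Differentiating under the integral gives
`𝒦' = (q−1)/(2q) · G` and `G'(t) = −t F''(t)`, so `G(0) = 0`, `G` decreases on `[0, t_*]` and
increases on `[t_*, ∞)`. As `F` is increasing and bounded and `F'` decreases beyond `t_*`,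
`t F'(2t) ≤ F(2t) − F(t) → 0`, so `G` is eventually positive. Hence `G` changes sign exactly once,
at some `t₀`, and `𝒦` decreases from `𝒦(0) = 0` on `[0, t₀]`, then increases at least linearly:
it has exactly one positive zero `t_c`. With `β'_c = t_c / F(t_c)` one has `β'_c W s_c = t_c W`,
which turns stationarity into the definition of `s_c`, and
`p_{β_c,0}(s_c) − p_{β_c,0}(0) = E[W] · 𝒦(t_c) = 0`.
-/

open Real

section SignChange

variable {F D G K g : ℝ → ℝ}

lemma hasDerivAt_sub_mul_deriv {t d : ℝ} (hF : HasDerivAt F (D t) t) (hD : HasDerivAt D d t) :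
    HasDerivAt (fun t => F t - t * D t) (-(t * d)) t :=
  (hF.sub ((hasDerivAt_id' t).mul hD)).congr_deriv (by ring)

lemma continuous_sub_mul_deriv (hF : ∀ t, HasDerivAt F (D t) t) (hD : Continuous D) :
    Continuous fun t => F t - t * D t :=
  (continuous_iff_continuousAt.2 fun t => (hF t).continuousAt).sub (continuous_id.mul hD)

lemma strictAntiOn_sub_mul_deriv (hF : ∀ t, HasDerivAt F (D t) t) (hD : Continuous D)
    {a b : ℝ} (ha : 0 ≤ a) (hD' : ∀ t ∈ Ioo a b, 0 < deriv D t) :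
    StrictAntiOn (fun t => F t - t * D t) (Icc a b) := by
  refine strictAntiOn_of_deriv_neg (convex_Icc a b)
    (continuous_sub_mul_deriv hF hD).continuousOn fun t ht => ?_
  rw [interior_Icc] at ht
  have hDt := differentiableAt_of_deriv_ne_zero (hD' t ht).ne'
  rw [(hasDerivAt_sub_mul_deriv (hF t) hDt.hasDerivAt).deriv, neg_lt_zero]
  exact mul_pos (ha.trans_lt ht.1) (hD' t ht)

lemma strictMonoOn_sub_mul_deriv (hF : ∀ t, HasDerivAt F (D t) t) (hD : Continuous D)
    {a : ℝ} (ha : 0 ≤ a) (hD' : ∀ t ∈ Ioi a, deriv D t < 0) :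
    StrictMonoOn (fun t => F t - t * D t) (Ici a) := by
  refine strictMonoOn_of_deriv_pos (convex_Ici a)
    (continuous_sub_mul_deriv hF hD).continuousOn fun t ht => ?_
  rw [interior_Ici] at ht
  have hDt := differentiableAt_of_deriv_ne_zero (hD' t ht).ne
  rw [(hasDerivAt_sub_mul_deriv (hF t) hDt.hasDerivAt).deriv, neg_pos]
  exact mul_neg_of_pos_of_neg (ha.trans_lt ht) (hD' t ht)

lemma eventually_pos_sub_mul_deriv (hF : ∀ t, HasDerivAt F (D t) t) (hmono : Monotone F)
    (hbdd : BddAbove (range F)) {a b : ℝ} (hD : AntitoneOn D (Ici a)) (hb : 0 < F b) :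
    ∀ᶠ t in atTop, 0 < F t - t * D t := by
  have hlim : Tendsto (fun t => F (2 * t) - F t) atTop (𝓝 0) := by
    have h := tendsto_atTop_ciSup hmono hbdd
    simpa using (h.comp (tendsto_id.const_mul_atTop two_pos)).sub h
  have hdouble : ∀ᶠ t in atTop, 0 < F (2 * t) - 2 * t * D (2 * t) := by
    filter_upwards [hlim.eventually (gt_mem_nhds (half_pos hb)),
      eventually_ge_atTop (max a b), eventually_gt_atTop 0] with t hsmall hab ht
    have hslope : D (2 * t) * (2 * t - t) ≤ F (2 * t) - F t := by
      refine (convex_Icc t (2 * t)).mul_sub_le_image_sub_of_le_deriv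
        (fun x _ => (hF x).continuousAt.continuousWithinAt)
        (fun x _ => (hF x).differentiableAt.differentiableWithinAt) (fun x hx => ?_)
        t (left_mem_Icc.2 (by linarith)) (2 * t) (right_mem_Icc.2 (by linarith)) (by linarith)
      rw [interior_Icc] at hx
      rw [(hF x).deriv]
      exact hD (mem_Ici.2 ((le_max_left a b).trans (hab.trans hx.1.le)))
        (mem_Ici.2 (by linarith [le_max_left a b])) hx.2.le
    have hFb : F b ≤ F (2 * t) := hmono (by linarith [le_max_right a b])
    nlinarith
  filter_upwards [(tendsto_id.atTop_div_const two_pos).eventually hdouble] with t ht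
  rwa [id, mul_div_cancel₀ t two_ne_zero] at ht

lemma exists_sign_change_of_strictAntiOn_of_strictMonoOn (hG : Continuous G) (hG0 : G 0 = 0)
    {s T : ℝ} (hs : 0 < s) (hanti : StrictAntiOn G (Icc 0 s)) (hmono : StrictMonoOn G (Ici s))
    (hsT : s ≤ T) (hGT : 0 < G T) :
    ∃ t₀, s < t₀ ∧ (∀ t ∈ Ioo 0 t₀, G t < 0) ∧ ∀ t ∈ Ioi t₀, 0 < G t := by
  have hGs : G s < 0 := hG0 ▸ hanti (left_mem_Icc.2 hs.le) (right_mem_Icc.2 hs.le) hs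
  obtain ⟨t₀, ht₀, hGt₀⟩ := intermediate_value_Ioo hsT hG.continuousOn ⟨hGs, hGT⟩
  refine ⟨t₀, ht₀.1, fun t ht => ?_, fun t ht => ?_⟩
  · rcases le_or_gt t s with hts | hst
    · exact hG0 ▸ hanti (left_mem_Icc.2 hs.le) ⟨ht.1.le, hts⟩ ht.1
    · exact hGt₀ ▸ hmono (mem_Ici.2 hst.le) (mem_Ici.2 ht₀.1.le) ht.2
  · exact hGt₀ ▸ hmono (mem_Ici.2 ht₀.1.le) (mem_Ici.2 (ht₀.1.trans ht).le) ht

lemma existsUnique_pos_eq_zero_of_hasDerivAt (hK : ∀ t, HasDerivAt K (g t) t) (hK0 : K 0 = 0)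
    {t₀ : ℝ} (ht₀ : 0 < t₀) (hneg : ∀ t ∈ Ioo 0 t₀, g t < 0) (hpos : ∀ t ∈ Ioi t₀, 0 < g t)
    (hmono : MonotoneOn g (Ioi t₀)) :
    ∃! t, 0 < t ∧ K t = 0 := by
  have hKcont : Continuous K := continuous_iff_continuousAt.2 fun t => (hK t).continuousAt
  have hderiv : deriv K = g := funext fun t => (hK t).deriv
  have hanti : StrictAntiOn K (Icc 0 t₀) :=
    strictAntiOn_of_deriv_neg (convex_Icc 0 t₀) hKcont.continuousOn
      (by rw [interior_Icc, hderiv]; exact hneg)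
  have hmonoK : StrictMonoOn K (Ici t₀) :=
    strictMonoOn_of_deriv_pos (convex_Ici t₀) hKcont.continuousOn
      (by rw [interior_Ici, hderiv]; exact hpos)
  have hKt₀ : K t₀ < 0 := hK0 ▸ hanti (left_mem_Icc.2 ht₀.le) (right_mem_Icc.2 ht₀.le) ht₀
  set T := t₀ + 1
  have hT : T ∈ Ioi t₀ := by simp [T]
  have hm := hpos T hT
  -- beyond `T` the slope of `K` is at least `g T > 0`, so `K` overtakes `|K T|` by `t₁`
  set t₁ := T + (1 + |K T|) / g T
  have hTt₁ : T ≤ t₁ := le_add_of_nonneg_right (by positivity)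
  have hKt₁ : 0 < K t₁ := by
    have hlin : g T * (t₁ - T) ≤ K t₁ - K T :=
      (convex_Ici T).mul_sub_le_image_sub_of_le_deriv hKcont.continuousOn
        (fun x _ => (hK x).differentiableAt.differentiableWithinAt)
        (fun x hx => by
          rw [interior_Ici] at hx
          rw [hderiv]
          exact hmono hT (mem_Ioi.2 (hT.out.trans hx)) (le_of_lt hx))
        T self_mem_Ici t₁ (mem_Ici.2 hTt₁) hTt₁
    have hstep : g T * (t₁ - T) = 1 + |K T| := by
      simp only [t₁, add_sub_cancel_left]
      field_simp
    linarith [neg_abs_le (K T)]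
  obtain ⟨tc, htc, hKtc⟩ := intermediate_value_Ioo (by linarith [hT.out] : t₀ ≤ t₁)
    hKcont.continuousOn ⟨hKt₀, hKt₁⟩
  refine ⟨tc, ⟨ht₀.trans htc.1, hKtc⟩, fun y ⟨hy, hKy⟩ => ?_⟩
  have hyt₀ : t₀ ≤ y := by
    by_contra! h
    have := hanti (left_mem_Icc.2 ht₀.le) ⟨hy.le, h.le⟩ hy
    linarith
  exact hmonoK.injOn (mem_Ici.2 hyt₀) (mem_Ici.2 htc.1.le) (hKy.trans hKtc.symm)

end SignChange

section Pointwise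

variable {q : ℕ}

lemma exp_add_natCast_sub_one_pos (hq : 1 ≤ q) (y : ℝ) : 0 < exp y + q - 1 := by
  have : (1 : ℝ) ≤ q := by exact_mod_cast hq
  linarith [exp_pos y]

lemma abs_exp_sub_one_div_le_one (hq : 2 ≤ q) (y : ℝ) :
    |(exp y - 1) / (exp y + q - 1)| ≤ 1 := by
  have hq' : (2 : ℝ) ≤ q := by exact_mod_cast hq
  have hd := exp_add_natCast_sub_one_pos (by omega : 1 ≤ q) y
  rw [abs_div, abs_of_pos hd, div_le_one hd, abs_le]
  constructor <;> linarith [exp_pos y]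

lemma exp_le_sq_exp_add_natCast_sub_one (hq : 2 ≤ q) (y : ℝ) :
    exp y ≤ (exp y + q - 1) ^ 2 := by
  have hq' : (2 : ℝ) ≤ q := by exact_mod_cast hq
  nlinarith [exp_pos y, sq_nonneg (exp y + q - 2)]

lemma abs_log_exp_add_natCast_sub_one_div_le (hq : 1 ≤ q) (y : ℝ) :
    |log ((exp y + q - 1) / q)| ≤ |y| := by
  have hq' : (1 : ℝ) ≤ q := by exact_mod_cast hq
  have hx : 0 < (exp y + q - 1) / q :=
    div_pos (exp_add_natCast_sub_one_pos hq y) (by linarith)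
  -- `(e^y + q - 1)/q` is a convex combination of `1` and `e^y`
  rcases le_total 0 y with hy | hy
  · have h1 : 1 ≤ exp y := one_le_exp hy
    have hlo : 1 ≤ (exp y + q - 1) / q := by rw [le_div_iff₀ (by linarith)]; linarith
    have hhi : (exp y + q - 1) / q ≤ exp y := by rw [div_le_iff₀ (by linarith)]; nlinarith
    rw [abs_of_nonneg (log_nonneg hlo), abs_of_nonneg hy]
    exact (log_le_log hx hhi).trans_eq (log_exp y)
  · have h1 : exp y ≤ 1 := exp_le_one_iff.2 hy
    have hlo : exp y ≤ (exp y + q - 1) / q := by rw [le_div_iff₀ (by linarith)]; nlinarith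
    have hhi : (exp y + q - 1) / q ≤ 1 := by rw [div_le_one (by linarith)]; linarith
    rw [abs_of_nonpos (log_nonpos hx.le hhi), abs_of_nonpos hy, neg_le_neg_iff]
    exact (log_exp y).symm.trans_le (log_le_log (exp_pos y) hlo)

lemma norm_mul_natCast_mul_exp_div_sq_le (hq : 2 ≤ q) {w E : ℝ} (hw : 0 ≤ w) (hE : 0 < E)
    (t : ℝ) : ‖w / E * (q * w * exp (t * w) / (exp (t * w) + q - 1) ^ 2)‖ ≤ q / E * w ^ 2 := by
  have hd := exp_add_natCast_sub_one_pos (by omega : 1 ≤ q) (t * w)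
  have hfrac : q * w * exp (t * w) / (exp (t * w) + q - 1) ^ 2 ≤ q * w := by
    rw [div_le_iff₀ (pow_pos hd 2)]
    exact mul_le_mul_of_nonneg_left (exp_le_sq_exp_add_natCast_sub_one hq _) (by positivity)
  rw [Real.norm_of_nonneg (by positivity)]
  calc _ ≤ w / E * (q * w) := by gcongr
    _ = q / E * w ^ 2 := by ring

lemma hasDerivAt_mul_exp_sub_one_div (hq : 1 ≤ q) (c w t : ℝ) :
    HasDerivAt (fun t => c * (exp (t * w) - 1) / (exp (t * w) + q - 1))
      (c * (q * w * exp (t * w) / (exp (t * w) + q - 1) ^ 2)) t := by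
  have hx : HasDerivAt (fun t => exp (t * w)) (exp (t * w) * w) t :=
    (hasDerivAt_mul_const w).exp
  refine (((hx.sub_const 1).const_mul c).div ((hx.add_const _).sub_const 1)
    (exp_add_natCast_sub_one_pos hq _).ne').congr_deriv ?_
  ring

lemma hasDerivAt_log_exp_add_natCast_sub_one_div (hq : 1 ≤ q) (w t : ℝ) :
    HasDerivAt (fun t => log ((exp (t * w) + q - 1) / q))
      (w * exp (t * w) / (exp (t * w) + q - 1)) t := by
  have hq' : (0 : ℝ) < q := by exact_mod_cast hq
  have hd := exp_add_natCast_sub_one_pos hq (t * w)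
  have hx : HasDerivAt (fun t => exp (t * w)) (exp (t * w) * w) t :=
    (hasDerivAt_mul_const w).exp
  refine ((((hx.add_const _).sub_const 1).div_const (q : ℝ)).log
    (div_pos hd hq').ne').congr_deriv ?_
  field_simp

end Pointwise

noncomputable def FfunDeriv {Ω : Type*} [MeasurableSpace Ω] (μ : Measure Ω)
    (W : Ω → ℝ) (q : ℕ) (t : ℝ) : ℝ :=
  ∫ ω, W ω / (∫ ω', W ω' ∂μ) * (q * W ω * exp (t * W ω) / (exp (t * W ω) + q - 1) ^ 2) ∂μ

section Potts

variable {Ω : Type*} [MeasurableSpace Ω] {μ : Measure Ω} {W : Ω → ℝ} {q : ℕ}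

lemma integrable_mul_exp_sub_one_div (hq : 2 ≤ q) (hW : Integrable W μ) (E t : ℝ) :
    Integrable (fun ω => W ω / E * (exp (t * W ω) - 1) / (exp (t * W ω) + q - 1)) μ := by
  have := hW.aemeasurable
  refine (hW.div_const E).norm.mono' (AEMeasurable.aestronglyMeasurable (by fun_prop))
    (Eventually.of_forall fun ω => ?_)
  rw [mul_div_assoc, norm_mul]
  exact mul_le_of_le_one_right (norm_nonneg _) (abs_exp_sub_one_div_le_one hq _)

lemma integrable_log_exp_add_natCast_sub_one_div (hq : 1 ≤ q) (hW : Integrable W μ) (t : ℝ) :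
    Integrable (fun ω => log ((exp (t * W ω) + q - 1) / q)) μ := by
  have := hW.aemeasurable
  refine (hW.const_mul t).norm.mono'
    (measurable_log.comp_aemeasurable (by fun_prop)).aestronglyMeasurable
    (Eventually.of_forall fun ω => ?_)
  exact abs_log_exp_add_natCast_sub_one_div_le hq _

lemma Ffun_zero : Ffun μ W q 0 = 0 := by
  simp [Ffun]

lemma hasDerivAt_Ffun (hq : 2 ≤ q) (hWnn : ∀ ω, 0 ≤ W ω) (hW : Integrable W μ)
    (hEW : 0 < ∫ ω, W ω ∂μ) (hW2 : Integrable (fun ω => W ω ^ 2) μ) (t : ℝ) :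
    HasDerivAt (Ffun μ W q) (FfunDeriv μ W q t) t := by
  have := hW.aemeasurable
  exact (hasDerivAt_integral_of_dominated_loc_of_deriv_le (x₀ := t)
    (F := fun t ω => W ω / (∫ ω', W ω' ∂μ) * (exp (t * W ω) - 1) / (exp (t * W ω) + q - 1))
    univ_mem (Eventually.of_forall fun _ => AEMeasurable.aestronglyMeasurable (by fun_prop))
    (integrable_mul_exp_sub_one_div hq hW _ t) (AEMeasurable.aestronglyMeasurable (by fun_prop))
    (Eventually.of_forall fun ω s _ => norm_mul_natCast_mul_exp_div_sq_le hq (hWnn ω) hEW s)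
    (hW2.const_mul _)
    (Eventually.of_forall fun ω s _ =>
      hasDerivAt_mul_exp_sub_one_div (by omega : 1 ≤ q) _ (W ω) s)).2

lemma continuous_FfunDeriv (hq : 2 ≤ q) (hWnn : ∀ ω, 0 ≤ W ω) (hW : AEMeasurable W μ)
    (hEW : 0 < ∫ ω, W ω ∂μ) (hW2 : Integrable (fun ω => W ω ^ 2) μ) :
    Continuous (FfunDeriv μ W q) :=
  continuous_iff_continuousAt.2 fun t =>
    continuousAt_of_dominated (Eventually.of_forall fun _ => by fun_prop)
      (Eventually.of_forall fun s => Eventually.of_forall fun ω =>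
        norm_mul_natCast_mul_exp_div_sq_le hq (hWnn ω) hEW s)
      (hW2.const_mul _)
      (Eventually.of_forall fun _ => by
        fun_prop (disch := exact (pow_pos (exp_add_natCast_sub_one_pos (by omega) _) 2).ne'))

lemma monotone_Ffun (hq : 2 ≤ q) (hWnn : ∀ ω, 0 ≤ W ω) (hW : Integrable W μ)
    (hEW : 0 < ∫ ω, W ω ∂μ) (hW2 : Integrable (fun ω => W ω ^ 2) μ) :
    Monotone (Ffun μ W q) := by
  have hF := hasDerivAt_Ffun hq hWnn hW hEW hW2
  refine monotone_of_deriv_nonneg (fun t => (hF t).differentiableAt) fun t => ?_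
  rw [(hF t).deriv]
  refine integral_nonneg fun ω => ?_
  have := exp_add_natCast_sub_one_pos (by omega : 1 ≤ q) (t * W ω)
  have := hWnn ω
  positivity

lemma Ffun_le_one (hq : 2 ≤ q) (hWnn : ∀ ω, 0 ≤ W ω) (hW : Integrable W μ)
    (hEW : 0 < ∫ ω, W ω ∂μ) (t : ℝ) : Ffun μ W q t ≤ 1 := by
  calc Ffun μ W q t ≤ ∫ ω, W ω / ∫ ω', W ω' ∂μ ∂μ :=
        integral_mono (integrable_mul_exp_sub_one_div hq hW _ t) (hW.div_const _) fun ω => by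
          rw [mul_div_assoc]
          exact mul_le_of_le_one_right (div_nonneg (hWnn ω) hEW.le)
            (le_of_abs_le (abs_exp_sub_one_div_le_one hq _))
    _ = 1 := by rw [integral_div, div_self hEW.ne']

lemma Ffun_pos (hq : 2 ≤ q) (hWnn : ∀ ω, 0 ≤ W ω) (hW : Integrable W μ)
    (hEW : 0 < ∫ ω, W ω ∂μ) {t : ℝ} (ht : 0 < t) : 0 < Ffun μ W q t := by
  set E := ∫ ω, W ω ∂μ
  have hterm_pos : ∀ ω, 0 < W ω →
      0 < W ω / E * (exp (t * W ω) - 1) / (exp (t * W ω) + q - 1) := fun ω hω => by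
    have := add_one_lt_exp (mul_pos ht hω).ne'
    exact div_pos (mul_pos (div_pos hω hEW) (by linarith [mul_pos ht hω]))
      (exp_add_natCast_sub_one_pos (by omega : 1 ≤ q) _)
  have hterm_nonneg :
      0 ≤ fun ω => W ω / E * (exp (t * W ω) - 1) / (exp (t * W ω) + q - 1) := fun ω =>
    (hWnn ω).eq_or_lt.elim (fun h => by simp [← h]) fun h => (hterm_pos ω h).le
  rw [Ffun, integral_pos_iff_support_of_nonneg hterm_nonneg
    (integrable_mul_exp_sub_one_div hq hW _ t)]
  refine ((integral_pos_iff_support_of_nonneg hWnn hW).1 hEW).trans_le (measure_mono ?_)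
  exact fun ω hω => (hterm_pos ω ((hWnn ω).lt_of_ne (Ne.symm hω))).ne'

lemma integral_mul_exp_div (hq : 2 ≤ q) (hW : Integrable W μ) (hEW : (∫ ω, W ω ∂μ) ≠ 0)
    (t : ℝ) :
    ∫ ω, W ω * exp (t * W ω) / (exp (t * W ω) + q - 1) ∂μ
      = ((q : ℝ) - 1) / q * ((∫ ω, W ω ∂μ) * Ffun μ W q t) + (∫ ω, W ω ∂μ) / q := by
  set E := ∫ ω, W ω ∂μ
  have hq' : (q : ℝ) ≠ 0 := by norm_cast; omega
  have hsplit : ∀ ω, W ω * exp (t * W ω) / (exp (t * W ω) + q - 1)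
      = ((q : ℝ) - 1) / q * E * (W ω / E * (exp (t * W ω) - 1) / (exp (t * W ω) + q - 1))
        + W ω / q := fun ω => by
    have hd := (exp_add_natCast_sub_one_pos (by omega : 1 ≤ q) (t * W ω)).ne'
    generalize exp (t * W ω) = e at hd ⊢
    field_simp
    ring
  simp_rw [hsplit]
  rw [integral_add ((integrable_mul_exp_sub_one_div hq hW _ t).const_mul _) (hW.div_const _),
    integral_const_mul, integral_div, Ffun]
  ring

lemma Kfun_zero : Kfun μ W q 0 = 0 := by
  simp [Kfun, Ffun_zero]

lemma hasDerivAt_Kfun (hq : 2 ≤ q) (hWnn : ∀ ω, 0 ≤ W ω) (hW : Integrable W μ)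
    (hEW : 0 < ∫ ω, W ω ∂μ) (hW2 : Integrable (fun ω => W ω ^ 2) μ) (t : ℝ) :
    HasDerivAt (Kfun μ W q)
      (((q : ℝ) - 1) / (2 * q) * (Ffun μ W q t - t * FfunDeriv μ W q t)) t := by
  have := hW.aemeasurable
  have hq' : (q : ℝ) ≠ 0 := by norm_cast; omega
  have hlog := (hasDerivAt_integral_of_dominated_loc_of_deriv_le (x₀ := t)
    (F := fun t ω => log ((exp (t * W ω) + q - 1) / q)) (bound := W) univ_mem
    (Eventually.of_forall fun s =>
      (integrable_log_exp_add_natCast_sub_one_div (by omega) hW s).aestronglyMeasurable)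
    (integrable_log_exp_add_natCast_sub_one_div (by omega) hW t)
    (AEMeasurable.aestronglyMeasurable (by fun_prop))
    (Eventually.of_forall fun ω s _ => ?_) hW
    (Eventually.of_forall fun ω s _ =>
      hasDerivAt_log_exp_add_natCast_sub_one_div (by omega) (W ω) s)).2
  · have hK := ((hlog.const_mul (1 / ∫ ω, W ω ∂μ)).sub
      (((hasDerivAt_id' t).mul (hasDerivAt_Ffun hq hWnn hW hEW hW2 t)).const_mul
        (((q : ℝ) - 1) / (2 * q)))).sub ((hasDerivAt_id' t).div_const (q : ℝ))
    refine hK.congr_deriv ?_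
    rw [integral_mul_exp_div hq hW hEW.ne']
    field_simp
    ring
  · have hd := exp_add_natCast_sub_one_pos (by omega : 1 ≤ q) (s * W ω)
    have hw := hWnn ω
    have hq2 : (2 : ℝ) ≤ q := by exact_mod_cast hq
    rw [Real.norm_of_nonneg (by positivity), div_le_iff₀ hd]
    exact mul_le_mul_of_nonneg_left (by linarith) hw

lemma pfun_sub_pfun_zero [IsProbabilityMeasure μ] (hq : 1 ≤ q) (hW : Integrable W μ)
    (hEW : (∫ ω, W ω ∂μ) ≠ 0) {β t : ℝ} (hβ : exp β - 1 = t / Ffun μ W q t)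
    (hF : Ffun μ W q t ≠ 0) :
    pfun μ W q β (Ffun μ W q t) - pfun μ W q β 0 = (∫ ω, W ω ∂μ) * Kfun μ W q t := by
  have hq' : (q : ℝ) ≠ 0 := by norm_cast; omega
  have hexp : ∀ ω, t / Ffun μ W q t * W ω * Ffun μ W q t = t * W ω := fun ω => by
    field_simp
  have hlog : ∀ ω, log (exp (t * W ω) + q - 1)
      = log ((exp (t * W ω) + q - 1) / q) + log q := fun ω => by
    rw [log_div (exp_add_natCast_sub_one_pos hq _).ne' hq', sub_add_cancel]
  simp only [pfun, Kfun, hβ, hexp, hlog, mul_zero, exp_zero, add_sub_cancel_left]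
  rw [integral_add (integrable_log_exp_add_natCast_sub_one_div hq hW t) (integrable_const _)]
  simp only [integral_const, probReal_univ, one_smul]
  field_simp
  ring

lemma existsUnique_pos_Kfun_eq_zero (hq : 2 ≤ q) (hWnn : ∀ ω, 0 ≤ W ω) (hW : Integrable W μ)
    (hEW : 0 < ∫ ω, W ω ∂μ) (hW2 : Integrable (fun ω => W ω ^ 2) μ) {tstar : ℝ}
    (htstar : 0 < tstar)
    (hconvex : ∀ t, 0 < t → t < tstar → 0 < deriv (deriv (Ffun μ W q)) t)
    (hconcave : ∀ t, tstar < t → deriv (deriv (Ffun μ W q)) t < 0) :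
    ∃! t, 0 < t ∧ Kfun μ W q t = 0 := by
  have hF := hasDerivAt_Ffun hq hWnn hW hEW hW2
  have hD := continuous_FfunDeriv hq hWnn hW.aemeasurable hEW hW2
  rw [show deriv (Ffun μ W q) = FfunDeriv μ W q from funext fun t => (hF t).deriv]
    at hconvex hconcave
  have hanti := strictAntiOn_sub_mul_deriv hF hD le_rfl fun t ht => hconvex t ht.1 ht.2
  have hmono := strictMonoOn_sub_mul_deriv hF hD htstar.le hconcave
  have hDanti : AntitoneOn (FfunDeriv μ W q) (Ici tstar) :=
    (strictAntiOn_of_deriv_neg (convex_Ici tstar) hD.continuousOn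
      (by rw [interior_Ici]; exact hconcave)).antitoneOn
  have hbdd : BddAbove (range (Ffun μ W q)) :=
    ⟨1, by rintro _ ⟨t, rfl⟩; exact Ffun_le_one hq hWnn hW hEW t⟩
  obtain ⟨T, hGT, hT⟩ := ((eventually_pos_sub_mul_deriv hF (monotone_Ffun hq hWnn hW hEW hW2)
    hbdd hDanti (Ffun_pos hq hWnn hW hEW one_pos)).and (eventually_ge_atTop tstar)).exists
  obtain ⟨t₀, htstart₀, hneg, hpos⟩ := exists_sign_change_of_strictAntiOn_of_strictMonoOn
    (continuous_sub_mul_deriv hF hD) (by simp [Ffun_zero]) htstar hanti hmono hT hGT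
  have hc : (0 : ℝ) < ((q : ℝ) - 1) / (2 * q) := by
    have : (2 : ℝ) ≤ q := by exact_mod_cast hq
    exact div_pos (by linarith) (by linarith)
  exact existsUnique_pos_eq_zero_of_hasDerivAt (hasDerivAt_Kfun hq hWnn hW hEW hW2) Kfun_zero
    (htstar.trans htstart₀) (fun t ht => mul_neg_of_pos_of_neg hc (hneg t ht))
    (fun t ht => mul_pos hc (hpos t ht))
    fun x hx y hy hxy => mul_le_mul_of_nonneg_left
      (hmono.monotoneOn (mem_Ici.2 (htstart₀.trans hx).le) (mem_Ici.2 (htstart₀.trans hy).le) hxy)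
      hc.le

end Potts

theorem critical_value_zero_field_general
    {Ω : Type*} [MeasurableSpace Ω] (μ : Measure Ω) [IsProbabilityMeasure μ]
    (W : Ω → ℝ) (hWnn : ∀ ω, 0 ≤ W ω)
    (hWint : Integrable W μ) (hEW : 0 < ∫ ω, W ω ∂μ)
    (hW2 : Integrable (fun ω => (W ω) ^ 2) μ)
    (q : ℕ) (hq : 3 ≤ q)
    (tstar : ℝ) (htstar : 0 < tstar)
    (hconvex : ∀ t : ℝ, 0 < t → t < tstar → 0 < deriv (deriv (Ffun μ W q)) t)
    (hconcave : ∀ t : ℝ, tstar < t → deriv (deriv (Ffun μ W q)) t < 0) :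
    (∃! t : ℝ, 0 < t ∧ Kfun μ W q t = 0) ∧
    ∀ tc : ℝ, 0 < tc → Kfun μ W q tc = 0 →
      (Real.exp (Real.log (1 + tc / Ffun μ W q tc)) - 1 = tc / Ffun μ W q tc) ∧
      ((∫ ω, (W ω / (∫ ω', W ω' ∂μ)) *
          (Real.exp ((Real.exp (Real.log (1 + tc / Ffun μ W q tc)) - 1) * W ω *
            Ffun μ W q tc) - 1) /
          (Real.exp ((Real.exp (Real.log (1 + tc / Ffun μ W q tc)) - 1) * W ω *
            Ffun μ W q tc) + q - 1) ∂μ) = Ffun μ W q tc) ∧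
      pfun μ W q (Real.log (1 + tc / Ffun μ W q tc)) (Ffun μ W q tc)
        = pfun μ W q (Real.log (1 + tc / Ffun μ W q tc)) 0 := by
  have hq2 : 2 ≤ q := by omega
  refine ⟨existsUnique_pos_Kfun_eq_zero hq2 hWnn hWint hEW hW2 htstar hconvex hconcave,
    fun tc htc hKtc => ?_⟩
  have hF := Ffun_pos hq2 hWnn hWint hEW htc
  have hβ : exp (log (1 + tc / Ffun μ W q tc)) - 1 = tc / Ffun μ W q tc := by
    rw [exp_log (add_pos one_pos (div_pos htc hF))]
    ring
  have hβs : ∀ ω, tc / Ffun μ W q tc * W ω * Ffun μ W q tc = tc * W ω := fun ω => by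
    field_simp
  refine ⟨hβ, by simp only [hβ, hβs]; rfl, sub_eq_zero.1 ?_⟩
  rw [pfun_sub_pfun_zero (by omega) hWint hEW.ne' hβ hF.ne', hKtc, mul_zero]

/-- **Critical value in zero field**: there is a unique `t_c > 0` with `𝒦(t_c)=0`;
setting `β_c = log(1+t_c/𝓕_0(t_c))` and `s_c = 𝓕_0(t_c)`, one has
`e^{β_c}−1 = t_c/𝓕_0(t_c)`, the stationarity condition holds at `(β_c,s_c)`, and the
criticality condition `p_{β_c,0}(s_c)=p_{β_c,0}(0)` holds. -/
theorem critical_value_zero_field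
    {Ω : Type*} [MeasurableSpace Ω] (μ : Measure Ω) [IsProbabilityMeasure μ]
    (W : Ω → ℝ) (hWmeas : Measurable W) (hWnn : ∀ ω, 0 ≤ W ω)
    (hWint : Integrable W μ) (hEW : 0 < ∫ ω, W ω ∂μ)
    (hW2 : Integrable (fun ω => (W ω) ^ 2) μ)
    (q : ℕ) (hq : 3 ≤ q)
    (tstar : ℝ) (htstar : 0 < tstar)
    (hconvex : ∀ t : ℝ, 0 < t → t < tstar → 0 < deriv (deriv (Ffun μ W q)) t)
    (hconcave : ∀ t : ℝ, tstar < t → deriv (deriv (Ffun μ W q)) t < 0) :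
    (∃! t : ℝ, 0 < t ∧ Kfun μ W q t = 0) ∧
    ∀ tc : ℝ, 0 < tc → Kfun μ W q tc = 0 →
      (Real.exp (Real.log (1 + tc / Ffun μ W q tc)) - 1 = tc / Ffun μ W q tc) ∧
      ((∫ ω, (W ω / (∫ ω', W ω' ∂μ)) *
          (Real.exp ((Real.exp (Real.log (1 + tc / Ffun μ W q tc)) - 1) * W ω *
            Ffun μ W q tc) - 1) /
          (Real.exp ((Real.exp (Real.log (1 + tc / Ffun μ W q tc)) - 1) * W ω *
            Ffun μ W q tc) + q - 1) ∂μ) = Ffun μ W q tc) ∧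
      pfun μ W q (Real.log (1 + tc / Ffun μ W q tc)) (Ffun μ W q tc)
        = pfun μ W q (Real.log (1 + tc / Ffun μ W q tc)) 0 :=
  critical_value_zero_field_general μ W hWnn hWint hEW hW2 q hq tstar htstar hconvex hconcave
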